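/- Let r ≥ 1 be an integer, q real with 0 < q < 1, x, w_1, …, w_r positive real numbers, and a_1, …, a_r positive real numbers. Then for every complex number s with Re(s) > 0, the Mellin transform identity (1/Γ(s)) ∫_0^∞ t^{s-1} ( 2^r Σ_{(m_1,…,m_r)∈ℕ^r} (-1)^{m_1+⋯+m_r} q^{a_1 m_1 + ⋯ + a_r m_r} e^{-[x + w_1 m_1 + ⋯ + w_r m_r]_q · t} ) dt = 2^r Σ_{(m_1,…,m_r)∈ℕ^r} (-1)^{m_1+⋯+m_r} q^{a_1 m_1 + ⋯ + a_r m_r} [x + w_1 m_1 + ⋯ + w_r m_r]_q^{-s} holds, both series converging absolutely and the integral converging. -/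

import Mathlib

/-!
Write the series as `F t = ∑ₘ Aₘ e^{-cₘ t}` with `Aₘ = (-1)^{|m|} q^{a·m}` and
`cₘ = [x + w·m]_q`. Since `‖Aₘ‖ = ∏ᵢ (q^{aᵢ})^{mᵢ}` is a product of geometric sequences,
`∑ ‖Aₘ‖ < ∞`, and since `cₘ ≥ [x]_q > 0`, `‖F t‖ ≤ (∑ ‖Aₘ‖) e^{-[x]_q t}`. This dominates
`t^{s-1} F t` on `(0, ∞)`, so termwise integration with `∫₀^∞ t^{s-1} e^{-c t} dt = Γ(s) c^{-s}`
gives the identity.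
-/

open Finset MeasureTheory

/-- The `q`-analogue `[y]_q = (1 - q^y)/(1 - q)` (real power). -/
noncomputable def qnum (q y : ℝ) : ℝ := (1 - q ^ y) / (1 - q)

open Set Filter Complex

lemma summable_fin_pi_prod_of_nonneg : ∀ (r : ℕ) (f : Fin r → ℕ → ℝ),
    (∀ i, Summable (f i)) → (∀ i n, 0 ≤ f i n) →
    Summable (fun m : Fin r → ℕ => ∏ i, f i (m i))
  | 0, _, _, _ => .of_finite
  | n + 1, f, hf, hnn => by
      have ih := summable_fin_pi_prod_of_nonneg n (fun i => f i.succ) (fun i => hf _)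
        (fun i k => hnn _ _)
      have h := (hf 0).mul_of_nonneg ih (hnn 0) fun m => prod_nonneg fun i _ => hnn _ _
      rw [← (Fin.consEquiv fun _ : Fin (n + 1) => ℕ).summable_iff]
      refine h.congr fun p => ?_
      simp [Fin.consEquiv, Fin.prod_univ_succ]

lemma summable_rpow_sum_mul_natCast {q : ℝ} (hq0 : 0 < q) (hq1 : q < 1) {r : ℕ}
    {a : Fin r → ℝ} (ha : ∀ i, 0 < a i) :
    Summable fun m : Fin r → ℕ => q ^ (∑ i, a i * (m i : ℝ)) := by
  refine (summable_fin_pi_prod_of_nonneg r (fun i k => (q ^ a i) ^ k)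
    (fun i => summable_geometric_of_lt_one (by positivity) (Real.rpow_lt_one hq0.le hq1 (ha i)))
    (fun i n => by positivity)).congr fun m => ?_
  rw [Real.rpow_sum_of_pos hq0]
  refine prod_congr rfl fun i _ => ?_
  rw [← Real.rpow_natCast, ← Real.rpow_mul hq0.le]

lemma qnum_pos {q y : ℝ} (hq0 : 0 < q) (hq1 : q < 1) (hy : 0 < y) : 0 < qnum q y :=
  div_pos (sub_pos.2 (Real.rpow_lt_one hq0.le hq1 hy)) (sub_pos.2 hq1)

lemma qnum_monotone {q : ℝ} (hq0 : 0 < q) (hq1 : q < 1) : Monotone (qnum q) := fun y z h => by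
  have : q ^ z ≤ q ^ y := Real.rpow_le_rpow_of_exponent_ge hq0 hq1.le h
  unfold qnum
  gcongr

lemma mellinConvergent_exp_neg_mul {s : ℂ} (hs : 0 < s.re) {c : ℝ} (hc : 0 < c) :
    MellinConvergent (fun t : ℝ => ((Real.exp (-(c * t)) : ℝ) : ℂ)) s := by
  have : MellinConvergent (fun t : ℝ => ((Real.exp (-t) : ℝ) : ℂ)) s := by
    simpa only [MellinConvergent, smul_eq_mul, mul_comm] using GammaIntegral_convergent hs
  exact (MellinConvergent.comp_mul_left hc).2 this

section DirichletSeries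

variable {ι : Type*} {A : ι → ℂ} {c : ι → ℝ} {c₀ : ℝ}

lemma norm_mul_cexp_neg_mul (z : ℂ) (c t : ℝ) :
    ‖z * exp (-(c : ℂ) * t)‖ = ‖z‖ * Real.exp (-(c * t)) := by
  rw [norm_mul, norm_exp]
  norm_cast
  rw [neg_mul]

lemma norm_mul_cexp_neg_mul_le (hc : ∀ m, c₀ ≤ c m) {t : ℝ} (ht : 0 ≤ t) (m : ι) :
    ‖A m * exp (-(c m : ℂ) * t)‖ ≤ ‖A m‖ * Real.exp (-(c₀ * t)) := by
  rw [norm_mul_cexp_neg_mul]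
  gcongr
  exact hc m

lemma summable_norm_mul_cexp_neg_mul (hc : ∀ m, c₀ ≤ c m) (hA : Summable fun m => ‖A m‖)
    {t : ℝ} (ht : 0 ≤ t) : Summable fun m => ‖A m * exp (-(c m : ℂ) * t)‖ :=
  .of_nonneg_of_le (fun _ => norm_nonneg _) (norm_mul_cexp_neg_mul_le hc ht) (hA.mul_right _)

lemma norm_tsum_mul_cexp_neg_mul_le (hc : ∀ m, c₀ ≤ c m) (hA : Summable fun m => ‖A m‖)
    {t : ℝ} (ht : 0 ≤ t) :
    ‖∑' m, A m * exp (-(c m : ℂ) * t)‖ ≤ (∑' m, ‖A m‖) * Real.exp (-(c₀ * t)) := by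
  rw [← tsum_mul_right]
  exact (norm_tsum_le_tsum_norm (summable_norm_mul_cexp_neg_mul hc hA ht)).trans <|
    (summable_norm_mul_cexp_neg_mul hc hA ht).tsum_le_tsum
      (norm_mul_cexp_neg_mul_le hc ht) (hA.mul_right _)

lemma summable_norm_mul_ofReal_cpow_neg (hc₀ : 0 < c₀) (hc : ∀ m, c₀ ≤ c m)
    (hA : Summable fun m => ‖A m‖) {s : ℂ} (hs : 0 ≤ s.re) :
    Summable fun m => ‖A m * (c m : ℂ) ^ (-s)‖ := by
  refine .of_nonneg_of_le (fun _ => norm_nonneg _) (fun m => ?_) (hA.mul_right (c₀ ^ (-s.re)))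
  rw [norm_mul, norm_cpow_eq_rpow_re_of_pos (hc₀.trans_le (hc m)), neg_re]
  exact mul_le_mul_of_nonneg_left (Real.rpow_le_rpow_of_nonpos hc₀ (hc m) (neg_nonpos.2 hs))
    (norm_nonneg _)

variable [Countable ι]

lemma mellinConvergent_tsum_mul_cexp_neg_mul (hc₀ : 0 < c₀) (hc : ∀ m, c₀ ≤ c m)
    (hA : Summable fun m => ‖A m‖) {s : ℂ} (hs : 0 < s.re) :
    MellinConvergent (fun t : ℝ => ∑' m, A m * exp (-(c m : ℂ) * t)) s := by
  have hmeas : AEStronglyMeasurable (fun t : ℝ => ∑' m, A m * exp (-(c m : ℂ) * t))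
      (volume.restrict (Ioi 0)) := by
    refine aestronglyMeasurable_of_tendsto_ae atTop
      (fun S => (Finset.measurable_sum (f := fun m (t : ℝ) => A m * exp (-(c m : ℂ) * t)) S
        fun m _ => by fun_prop).aestronglyMeasurable) ?_
    filter_upwards [ae_restrict_mem measurableSet_Ioi] with t ht
    exact (summable_norm_mul_cexp_neg_mul hc hA (le_of_lt ht)).of_norm.hasSum
  have hcpow :
      AEStronglyMeasurable (fun t : ℝ => (t : ℂ) ^ (s - 1)) (volume.restrict (Ioi 0)) :=
    ContinuousOn.aestronglyMeasurable (fun t ht => ((continuousAt_cpow_const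
      (ofReal_mem_slitPlane.2 ht)).comp continuous_ofReal.continuousAt).continuousWithinAt)
      measurableSet_Ioi
  refine (((mellinConvergent_exp_neg_mul hs hc₀).norm).const_mul (∑' m, ‖A m‖)).mono'
    (hcpow.smul hmeas) ?_
  filter_upwards [ae_restrict_mem measurableSet_Ioi] with t (ht : 0 < t)
  rw [norm_smul, norm_smul, norm_real, Real.norm_of_nonneg (Real.exp_pos _).le, mul_left_comm]
  gcongr
  exact norm_tsum_mul_cexp_neg_mul_le hc hA ht.le

lemma mellin_tsum_mul_cexp_neg_mul (hc₀ : 0 < c₀) (hc : ∀ m, c₀ ≤ c m)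
    (hA : Summable fun m => ‖A m‖) {s : ℂ} (hs : 0 < s.re) :
    mellin (fun t : ℝ => ∑' m, A m * exp (-(c m : ℂ) * t)) s =
      Gamma s * ∑' m, A m * (c m : ℂ) ^ (-s) := by
  have hcpos m : 0 < c m := hc₀.trans_le (hc m)
  have hF : ∀ t ∈ Ioi (0 : ℝ), HasSum (fun m => A m * (Real.exp (-c m * t) : ℂ))
      (∑' m, A m * exp (-(c m : ℂ) * t)) := fun t ht => by
    push_cast
    exact (summable_norm_mul_cexp_neg_mul hc hA (le_of_lt ht)).of_norm.hasSum
  have h_sum : Summable fun m => ‖A m‖ / c m ^ s.re := by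
    simpa [norm_mul, norm_cpow_eq_rpow_re_of_pos (hcpos _), Real.rpow_neg (hcpos _).le,
      div_eq_mul_inv] using summable_norm_mul_ofReal_cpow_neg hc₀ hc hA hs.le
  rw [← (hasSum_mellin (fun m => .inr (hcpos m)) hs hF h_sum).tsum_eq, ← tsum_mul_left]
  simp only [cpow_neg, div_eq_mul_inv, mul_assoc]

end DirichletSeries

theorem stmt_10_general (r : ℕ) (q : ℝ) (hq0 : 0 < q) (hq1 : q < 1)
    (x : ℝ) (hx : 0 < x) (w a : Fin r → ℝ) (hw : ∀ i, 0 < w i) (ha : ∀ i, 0 < a i)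
    (s : ℂ) (hs : 0 < s.re) :
    (∀ t : ℝ, 0 < t →
      Summable (fun m : Fin r → ℕ =>
        ‖(-1 : ℂ) ^ (∑ i, m i) * ((q ^ (∑ i, a i * m i) : ℝ) : ℂ) *
          Complex.exp (-(((qnum q (x + ∑ i, w i * m i) : ℝ) : ℂ)) * t)‖)) ∧
    Summable (fun m : Fin r → ℕ =>
      ‖(-1 : ℂ) ^ (∑ i, m i) * ((q ^ (∑ i, a i * m i) : ℝ) : ℂ) *
        ((qnum q (x + ∑ i, w i * m i) : ℝ) : ℂ) ^ (-s)‖) ∧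
    IntegrableOn (fun t : ℝ => (t : ℂ) ^ (s - 1) *
      ((2 : ℂ) ^ r * ∑' m : Fin r → ℕ,
        (-1 : ℂ) ^ (∑ i, m i) * ((q ^ (∑ i, a i * m i) : ℝ) : ℂ) *
          Complex.exp (-(((qnum q (x + ∑ i, w i * m i) : ℝ) : ℂ)) * t))) (Set.Ioi 0) ∧
    (1 / Complex.Gamma s) * ∫ t in Set.Ioi (0 : ℝ), (t : ℂ) ^ (s - 1) *
        ((2 : ℂ) ^ r * ∑' m : Fin r → ℕ,
          (-1 : ℂ) ^ (∑ i, m i) * ((q ^ (∑ i, a i * m i) : ℝ) : ℂ) *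
            Complex.exp (-(((qnum q (x + ∑ i, w i * m i) : ℝ) : ℂ)) * t)) =
      (2 : ℂ) ^ r * ∑' m : Fin r → ℕ,
        (-1 : ℂ) ^ (∑ i, m i) * ((q ^ (∑ i, a i * m i) : ℝ) : ℂ) *
          ((qnum q (x + ∑ i, w i * m i) : ℝ) : ℂ) ^ (-s) := by
  have hc (m : Fin r → ℕ) : qnum q x ≤ qnum q (x + ∑ i, w i * m i) :=
    qnum_monotone hq0 hq1 <| le_add_of_nonneg_right <|
      sum_nonneg fun i _ => mul_nonneg (hw i).le (Nat.cast_nonneg _)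
  have hA : Summable fun m : Fin r → ℕ =>
      ‖(-1 : ℂ) ^ (∑ i, m i) * ((q ^ (∑ i, a i * m i) : ℝ) : ℂ)‖ := by
    simpa [norm_real, abs_of_pos (Real.rpow_pos_of_pos hq0 _)]
      using summable_rpow_sum_mul_natCast hq0 hq1 ha
  have hc₀ := qnum_pos hq0 hq1 hx
  refine ⟨fun t ht => summable_norm_mul_cexp_neg_mul hc hA ht.le,
    summable_norm_mul_ofReal_cpow_neg hc₀ hc hA hs.le,
    (mellinConvergent_tsum_mul_cexp_neg_mul hc₀ hc hA hs).const_smul ((2 : ℂ) ^ r), ?_⟩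
  change 1 / Gamma s * mellin (fun t : ℝ => (2 : ℂ) ^ r • _) s = _
  rw [mellin_const_smul, mellin_tsum_mul_cexp_neg_mul hc₀ hc hA hs, smul_eq_mul,
    one_div, mul_left_comm, inv_mul_cancel_left₀ (Gamma_ne_zero_of_re_pos hs)]

theorem stmt_10 (r : ℕ) (hr : 1 ≤ r) (q : ℝ) (hq0 : 0 < q) (hq1 : q < 1)
    (x : ℝ) (hx : 0 < x) (w a : Fin r → ℝ) (hw : ∀ i, 0 < w i) (ha : ∀ i, 0 < a i)
    (s : ℂ) (hs : 0 < s.re) :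
    (∀ t : ℝ, 0 < t →
      Summable (fun m : Fin r → ℕ =>
        ‖(-1 : ℂ) ^ (∑ i, m i) * ((q ^ (∑ i, a i * m i) : ℝ) : ℂ) *
          Complex.exp (-(((qnum q (x + ∑ i, w i * m i) : ℝ) : ℂ)) * t)‖)) ∧
    Summable (fun m : Fin r → ℕ =>
      ‖(-1 : ℂ) ^ (∑ i, m i) * ((q ^ (∑ i, a i * m i) : ℝ) : ℂ) *
        ((qnum q (x + ∑ i, w i * m i) : ℝ) : ℂ) ^ (-s)‖) ∧
    IntegrableOn (fun t : ℝ => (t : ℂ) ^ (s - 1) *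
      ((2 : ℂ) ^ r * ∑' m : Fin r → ℕ,
        (-1 : ℂ) ^ (∑ i, m i) * ((q ^ (∑ i, a i * m i) : ℝ) : ℂ) *
          Complex.exp (-(((qnum q (x + ∑ i, w i * m i) : ℝ) : ℂ)) * t))) (Set.Ioi 0) ∧
    (1 / Complex.Gamma s) * ∫ t in Set.Ioi (0 : ℝ), (t : ℂ) ^ (s - 1) *
        ((2 : ℂ) ^ r * ∑' m : Fin r → ℕ,
          (-1 : ℂ) ^ (∑ i, m i) * ((q ^ (∑ i, a i * m i) : ℝ) : ℂ) *
            Complex.exp (-(((qnum q (x + ∑ i, w i * m i) : ℝ) : ℂ)) * t)) =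
      (2 : ℂ) ^ r * ∑' m : Fin r → ℕ,
        (-1 : ℂ) ^ (∑ i, m i) * ((q ^ (∑ i, a i * m i) : ℝ) : ℂ) *
          ((qnum q (x + ∑ i, w i * m i) : ℝ) : ℂ) ^ (-s) :=
  stmt_10_general r q hq0 hq1 x hx w a hw ha s hs
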